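/- arXiv:2403.07896 — 5 statements merged into one kernel-verified Lean document; each statement's English description precedes it below -/
import Mathlib

section
/- Let φ, π : ℝ → ℝ be strictly monotonically increasing and continuous, and let x_P, v, c ∈ ℝ. Define the aggregate utility U : ℝ → ℝ by U(x) = π(x) − c if π(x) < π(x_P), and U(x) = v − φ(x) − c otherwise. Then the supremum of U over all of ℝ is sSup (range U) = max(π(x_P), v − φ(x_P)) − c. -/
/-- The supremum of the aggregate utility over all disclosures is
`max (π xP) (v - φ xP) - c`. -/
theorem aggregate_utility_sup (φ π : ℝ → ℝ)
    (hφ : StrictMono φ) (hπ : StrictMono π)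
    (hφc : Continuous φ) (hπc : Continuous π)
    (xP v c : ℝ)
    (U : ℝ → ℝ)
    (hU : ∀ x, U x = if π x < π xP then π x - c else v - φ x - c) :
    sSup (Set.range U) = max (π xP) (v - φ xP) - c := by
  have hlub : IsLUB (Set.range U) (max (π xP) (v - φ xP) - c) := by
    constructor
    · rintro y ⟨x, rfl⟩
      rw [hU]
      split_ifs with h
      · have := le_max_left (π xP) (v - φ xP); linarith
      · push_neg at h
        have hx : xP ≤ x := by
          by_contra hx
          push_neg at hx
          exact absurd (hπ hx) (not_lt.mpr h)
        have hφx := hφ.monotone hx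
        have := le_max_right (π xP) (v - φ xP)
        linarith
    · intro b hb
      have h1 : v - φ xP - c ≤ b := by
        have := hb ⟨xP, rfl⟩
        rwa [hU, if_neg (lt_irrefl _)] at this
      have h2 : π xP - c ≤ b := by
        apply le_of_forall_sub_le
        intro ε hε
        obtain ⟨δ, hδ, hcont⟩ := Metric.continuous_iff.mp hπc xP ε hε
        have hxlt : xP - δ/2 < xP := by linarith
        have hdist : dist (xP - δ/2) xP < δ := by
          rw [Real.dist_eq]; rw [abs_lt]; constructor <;> linarith
        have hnear := hcont _ hdist
        rw [Real.dist_eq, abs_lt] at hnear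
        have hπlt : π (xP - δ/2) < π xP := hπ hxlt
        have := hb ⟨xP - δ/2, rfl⟩
        rw [hU, if_pos hπlt] at this
        linarith
      rw [sub_le_iff_le_add, max_le_iff]
      constructor <;> linarith
  exact hlub.csSup_eq ⟨U xP, xP, rfl⟩
end

section
/- Let φ, π : ℝ → ℝ be strictly monotonically increasing, and let x_P, v, c ∈ ℝ. Define the aggregate utility U : ℝ → ℝ by U(x) = π(x) − c if π(x) < π(x_P), and U(x) = v − φ(x) − c otherwise. Then every misreport is strictly suboptimal: for all x ≠ x_P, U(x) < max(π(x_P), v − φ(x_P)) − c. -/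
/-- Every misreport is strictly suboptimal for the aggregate utility. -/
theorem misreport_suboptimal (φ π : ℝ → ℝ)
    (hφ : StrictMono φ) (hπ : StrictMono π)
    (xP v c : ℝ)
    (U : ℝ → ℝ)
    (hU : ∀ x, U x = if π x < π xP then π x - c else v - φ x - c) :
    ∀ x ≠ xP, U x < max (π xP) (v - φ xP) - c := by
  intro x hx
  rcases lt_or_gt_of_ne hx with h | h
  · rw [hU x, if_pos (hπ h)]
    have := le_max_left (π xP) (v - φ xP)
    linarith [hπ h]
  · rw [hU x, if_neg (not_lt.mpr (hπ h).le)]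
    have := le_max_right (π xP) (v - φ xP)
    linarith [hφ h]
end

section
/- Let N be a positive natural number, and let λ, v, F ∈ ℝ with λ > 0 and v > 0. Let β, κ : Fin N → ℝ satisfy: β_i > 0 for all i; F > Σ_i β_i; β_i > λ · κ_i for all i; and κ_i > v + Σ_j β_j for all i. Then F > λ · N · v. -/
/-- Feasible collusion forces the fee to exceed `λ · N · v`. -/
theorem collusion_fee_bound (N : ℕ) (hN : 0 < N) (lam v F : ℝ)
    (hlam : lam > 0) (hv : v > 0)
    (β κ : Fin N → ℝ)
    (hβ : ∀ i, β i > 0)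
    (hF : F > ∑ i, β i)
    (hbribe : ∀ i, β i > lam * κ i)
    (hcoll : ∀ i, κ i > v + ∑ j, β j) :
    F > lam * N * v := by
  have hsum : (0:ℝ) < ∑ j, β j := Finset.sum_pos (fun i _ => hβ i) ⟨⟨0, hN⟩, Finset.mem_univ _⟩
  have key : ∀ i : Fin N, β i > lam * v := fun i =>
    lt_trans (by nlinarith [hcoll i, hsum]) (hbribe i)
  have : (∑ i, β i) > ∑ _i : Fin N, lam * v :=
    Finset.sum_lt_sum_of_nonempty ⟨⟨0, hN⟩, Finset.mem_univ _⟩ (fun i _ => key i)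
  simp [Finset.sum_const, mul_comm] at this
  nlinarith [this, hF]
end

section
/- Let N be a positive natural number, and let R, T, v, F ∈ ℝ with R > 0, T > 0 and v > 0. Set λ := 1 − exp(−(R·T)). Let β, κ : Fin N → ℝ satisfy: β_i > 0 for all i; F > Σ_i β_i; β_i > λ · κ_i for all i; and κ_i > v + Σ_j β_j for all i. Then R · T · N · v < F · exp(R·T); equivalently, T · N < (F / (R · v)) · exp(R·T). -/
/-- Rigorous collusion limit: `R·T·N·v < F·e^{RT}`, equivalently
`T·N < (F/(R·v))·e^{RT}`. -/
theorem collusion_limit (N : ℕ) (hN : 0 < N) (R T v F : ℝ)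
    (hR : R > 0) (hT : T > 0) (hv : v > 0)
    (β κ : Fin N → ℝ)
    (hβ : ∀ i, β i > 0)
    (hF : F > ∑ i, β i)
    (hbribe : ∀ i, β i > (1 - Real.exp (-(R * T))) * κ i)
    (hcoll : ∀ i, κ i > v + ∑ j, β j) :
    R * T * N * v < F * Real.exp (R * T) ∧
      T * N < F / (R * v) * Real.exp (R * T) := by
  set x := R * T with hxdef
  have hx : 0 < x := mul_pos hR hT
  have hepos : 0 < Real.exp (-x) := Real.exp_pos _
  have hexp : Real.exp (-x) < 1 := by
    rw [Real.exp_lt_one_iff]; linarith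
  have hlam : 0 < 1 - Real.exp (-x) := by linarith
  have hinv : Real.exp (-x) * Real.exp x = 1 := by
    rw [← Real.exp_add]; simp
  have key : x * Real.exp (-x) < 1 - Real.exp (-x) := by
    have h := Real.add_one_lt_exp (ne_of_gt hx)
    nlinarith [Real.exp_pos x]
  have hβsum : 0 < ∑ j, β j :=
    Finset.sum_pos (fun j _ => hβ j) ⟨⟨0, hN⟩, Finset.mem_univ _⟩
  have hsum : ∀ i : Fin N, (1 - Real.exp (-x)) * v < β i := by
    intro i
    have h1 := hbribe i
    have h2 := hcoll i
    nlinarith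
  have hNsum : (N : ℝ) * ((1 - Real.exp (-x)) * v) < ∑ i, β i := by
    have h := Finset.sum_lt_sum_of_nonempty
      (s := (Finset.univ : Finset (Fin N)))
      (f := fun _ => (1 - Real.exp (-x)) * v) (g := β)
      (Finset.univ_nonempty_iff.mpr ⟨⟨0, hN⟩⟩) (fun i _ => hsum i)
    simpa [Finset.sum_const, Finset.card_univ, nsmul_eq_mul] using h
  have hNpos : (0 : ℝ) < N := Nat.cast_pos.mpr hN
  have hF2 : (N : ℝ) * (x * Real.exp (-x) * v) < F := by
    nlinarith [mul_lt_mul_of_pos_left key (mul_pos hNpos hv)]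
  have hepos' : 0 < Real.exp x := Real.exp_pos _
  have heq : (N : ℝ) * (x * Real.exp (-x) * v) * Real.exp x = x * (N : ℝ) * v := by
    have h : (N : ℝ) * (x * Real.exp (-x) * v) * Real.exp x
        = x * (N : ℝ) * v * (Real.exp (-x) * Real.exp x) := by ring
    rw [h, hinv, mul_one]
  have h1 : x * (N : ℝ) * v < F * Real.exp x := by
    have h := mul_lt_mul_of_pos_right hF2 hepos'
    linarith [heq, h]
  constructor
  · linarith [h1]
  · rw [div_mul_eq_mul_div, lt_div_iff₀ (mul_pos hR hv)]
    have h2 : T * (N : ℝ) * (R * v) = x * (N : ℝ) * v := by rw [hxdef]; ring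
    linarith [h1, h2]
end

section
/- Let N be a positive natural number, and let R, T, v, m, ρ ∈ ℝ with R > 0, T > 0, 0 < m ≤ v, and ρ > 0. Set λ := 1 − exp(−(R·T)). Let β, κ : Fin N → ℝ satisfy: β_i > 0 for all i; ρ · m > Σ_i β_i; β_i > λ · κ_i for all i; and κ_i > v + Σ_j β_j for all i. Then (1 − exp(−(R·T))) · N < ρ. -/
/-- Valuation-independent collusion limit for a linear fee function. -/
theorem collusion_limit_linear (N : ℕ) (hN : 0 < N) (R T v m ρ : ℝ)
    (hR : R > 0) (hT : T > 0) (hm : 0 < m) (hmv : m ≤ v) (hρ : ρ > 0)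
    (β κ : Fin N → ℝ)
    (hβ : ∀ i, β i > 0)
    (hF : ρ * m > ∑ i, β i)
    (hbribe : ∀ i, β i > (1 - Real.exp (-(R * T))) * κ i)
    (hcoll : ∀ i, κ i > v + ∑ j, β j) :
    (1 - Real.exp (-(R * T))) * N < ρ := by
  set lam := 1 - Real.exp (-(R * T)) with hlam
  have hlam0 : 0 < lam := by
    have : Real.exp (-(R * T)) < 1 := by
      rw [Real.exp_lt_one_iff]
      nlinarith
    linarith
  have hsumpos : 0 < ∑ j, β j := by
    apply Finset.sum_pos (fun i _ => hβ i)
    exact Finset.univ_nonempty_iff.mpr ⟨⟨0, hN⟩⟩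
  have hkey : ∀ i : Fin N, lam * m < β i := fun i => by
    have h1 : m < κ i := by linarith [hcoll i]
    have := hbribe i
    nlinarith
  have hsum : lam * m * N < ∑ i, β i := by
    calc lam * m * N = ∑ _i : Fin N, lam * m := by
          simp [Finset.sum_const, mul_comm]
      _ < ∑ i, β i := Finset.sum_lt_sum_of_nonempty
          (Finset.univ_nonempty_iff.mpr ⟨⟨0, hN⟩⟩) (fun i _ => hkey i)
  nlinarith
end
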